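/- Let 0 < ε < 1/2, let X be uniform on {0,1}, let Z be independent of X with Pr(Z=0)=ε, and let Y = X ⊕ Z. If K is a random variable (on the same probability space, possibly after enlarging) such that H(K|X) = 0 and H(K|Y) = 0, then H(K) = 0. -/
import Mathlib


open scoped BigOperators

/-- `μ` is a probability mass function on the finite sample space `Ω`. -/
def IsPMF {Ω : Type*} [Fintype Ω] (μ : Ω → ℝ) : Prop :=
  (∀ ω, 0 ≤ μ ω) ∧ ∑ ω, μ ω = 1

/-- The probability that the random variable `X` takes the value `s`. -/
noncomputable def prob {Ω S : Type*} [Fintype Ω] [DecidableEq S]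
    (μ : Ω → ℝ) (X : Ω → S) (s : S) : ℝ :=
  ∑ ω ∈ Finset.univ.filter fun ω => X ω = s, μ ω

/-- Shannon entropy (natural logarithm) of a random variable with finite codomain. -/
noncomputable def entropy {Ω S : Type*} [Fintype Ω] [Fintype S] [DecidableEq S]
    (μ : Ω → ℝ) (X : Ω → S) : ℝ :=
  ∑ s, Real.negMulLog (prob μ X s)

/-- Conditional Shannon entropy `H(X | Y) = H(X, Y) - H(Y)`. -/
noncomputable def condEntropy {Ω S T : Type*} [Fintype Ω] [Fintype S] [Fintype T]
    [DecidableEq S] [DecidableEq T] (μ : Ω → ℝ) (X : Ω → S) (Y : Ω → T) : ℝ :=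
  entropy μ (fun ω => (X ω, Y ω)) - entropy μ Y

section Helpers

open Real Finset

variable {Ω S T : Type*} [Fintype Ω]

lemma prob_nonneg' [DecidableEq S] {μ : Ω → ℝ} (hμ : ∀ ω, 0 ≤ μ ω)
    (X : Ω → S) (s : S) : 0 ≤ prob μ X s :=
  Finset.sum_nonneg fun ω _ => hμ ω

lemma single_le_prob [DecidableEq S] {μ : Ω → ℝ} (hμ : ∀ ω, 0 ≤ μ ω)
    (X : Ω → S) (ω : Ω) : μ ω ≤ prob μ X (X ω) :=
  Finset.single_le_sum (fun ω _ => hμ ω) (by simp)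

lemma sum_prob [Fintype S] [DecidableEq S] (μ : Ω → ℝ) (X : Ω → S) :
    ∑ s, prob μ X s = ∑ ω, μ ω := by
  unfold prob
  rw [Finset.sum_fiberwise_eq_sum_filter]
  simp

lemma sum_joint [Fintype T] [DecidableEq S] [DecidableEq T]
    (μ : Ω → ℝ) (K : Ω → T) (X : Ω → S) (x : S) :
    ∑ k, prob μ (fun ω => (K ω, X ω)) (k, x) = prob μ X x := by
  unfold prob
  simp only [Finset.sum_filter]
  rw [Finset.sum_comm]
  refine Finset.sum_congr rfl fun ω _ => ?_
  simp only [Prod.mk.injEq]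
  by_cases h : X ω = x <;> simp [h]

/-- Each term `-f i * log (∑ f)` is at most `negMulLog (f i)`. -/
lemma term_le {a S : ℝ} (ha : 0 ≤ a) (haS : a ≤ S) :
    -(a * Real.log S) ≤ Real.negMulLog a := by
  rcases eq_or_lt_of_le ha with h | h
  · simp [← h]
  · rw [Real.negMulLog, neg_mul, neg_le_neg_iff]
    exact mul_le_mul_of_nonneg_left (Real.log_le_log h haS) ha

lemma negMulLog_sum_le {ι : Type*} (s : Finset ι) (f : ι → ℝ) (hf : ∀ i ∈ s, 0 ≤ f i) :
    Real.negMulLog (∑ i ∈ s, f i) ≤ ∑ i ∈ s, Real.negMulLog (f i) := by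
  rw [Real.negMulLog, neg_mul, Finset.sum_mul, ← Finset.sum_neg_distrib]
  exact Finset.sum_le_sum fun i hi => term_le (hf i hi)
    (Finset.single_le_sum hf hi)

lemma eq_sum_of_negMulLog_sum_eq {ι : Type*} (s : Finset ι) (f : ι → ℝ)
    (hf : ∀ i ∈ s, 0 ≤ f i)
    (h : ∑ i ∈ s, Real.negMulLog (f i) = Real.negMulLog (∑ i ∈ s, f i)) :
    ∀ i ∈ s, f i ≠ 0 → f i = ∑ j ∈ s, f j := by
  have h' : ∑ i ∈ s, (Real.negMulLog (f i) - (-(f i * Real.log (∑ j ∈ s, f j)))) = 0 := by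
    rw [Finset.sum_sub_distrib, h, Real.negMulLog, neg_mul, Finset.sum_neg_distrib,
      ← Finset.sum_mul]
    ring
  have hterm : ∀ i ∈ s,
      Real.negMulLog (f i) - (-(f i * Real.log (∑ j ∈ s, f j))) = 0 :=
    (Finset.sum_eq_zero_iff_of_nonneg (fun i hi => by
      have := term_le (hf i hi) (Finset.single_le_sum hf hi); linarith)).mp h'
  intro i hi hne
  have hpos : 0 < f i := lt_of_le_of_ne (hf i hi) (Ne.symm hne)
  have hSpos : 0 < ∑ j ∈ s, f j := lt_of_lt_of_le hpos (Finset.single_le_sum hf hi)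
  have := hterm i hi
  rw [Real.negMulLog, neg_mul] at this
  have hlog : Real.log (f i) = Real.log (∑ j ∈ s, f j) := by
    have : f i * Real.log (f i) = f i * Real.log (∑ j ∈ s, f j) := by linarith
    exact mul_left_cancel₀ hne this
  calc f i = Real.exp (Real.log (f i)) := (Real.exp_log hpos).symm
    _ = Real.exp (Real.log (∑ j ∈ s, f j)) := by rw [hlog]
    _ = ∑ j ∈ s, f j := Real.exp_log hSpos

/-- From `H(K|X) = 0`: at each value of `X`, at most one value of `K` has positive
joint probability. -/
lemma det_of_condEntropy_zero [Fintype S] [Fintype T] [DecidableEq S] [DecidableEq T]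
    {μ : Ω → ℝ} (hμ0 : ∀ ω, 0 ≤ μ ω) (K : Ω → T) (X : Ω → S)
    (h : condEntropy μ K X = 0) :
    ∀ x k k', prob μ (fun ω => (K ω, X ω)) (k, x) ≠ 0 →
      prob μ (fun ω => (K ω, X ω)) (k', x) ≠ 0 → k = k' := by
  have hjoint : entropy μ (fun ω => (K ω, X ω)) =
      ∑ x, ∑ k, Real.negMulLog (prob μ (fun ω => (K ω, X ω)) (k, x)) := by
    rw [entropy, Fintype.sum_prod_type, Finset.sum_comm]
  have hx : entropy μ X = ∑ x, Real.negMulLog (∑ k, prob μ (fun ω => (K ω, X ω)) (k, x)) := by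
    rw [entropy]
    exact Finset.sum_congr rfl fun x _ => by rw [sum_joint]
  have hsum0 : ∑ x, (∑ k, Real.negMulLog (prob μ (fun ω => (K ω, X ω)) (k, x)) -
      Real.negMulLog (∑ k, prob μ (fun ω => (K ω, X ω)) (k, x))) = 0 := by
    rw [Finset.sum_sub_distrib, ← hjoint, ← hx]
    have := h
    rw [condEntropy] at this
    linarith
  have hterm : ∀ x ∈ (Finset.univ : Finset S),
      ∑ k, Real.negMulLog (prob μ (fun ω => (K ω, X ω)) (k, x)) -
      Real.negMulLog (∑ k, prob μ (fun ω => (K ω, X ω)) (k, x)) = 0 :=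
    (Finset.sum_eq_zero_iff_of_nonneg (fun x _ => by
      have := negMulLog_sum_le Finset.univ
        (fun k => prob μ (fun ω => (K ω, X ω)) (k, x))
        (fun k _ => prob_nonneg' hμ0 _ _)
      linarith)).mp hsum0
  intro x k k' hk hk'
  by_contra hne
  have heq := hterm x (Finset.mem_univ x)
  have key := eq_sum_of_negMulLog_sum_eq Finset.univ
    (fun j => prob μ (fun ω => (K ω, X ω)) (j, x))
    (fun j _ => prob_nonneg' hμ0 _ _) (by linarith)
  have h1 : prob μ (fun ω => (K ω, X ω)) (k, x) = ∑ j, prob μ (fun ω => (K ω, X ω)) (j, x) :=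
    key k (Finset.mem_univ k) hk
  have h2 : prob μ (fun ω => (K ω, X ω)) (k', x) = ∑ j, prob μ (fun ω => (K ω, X ω)) (j, x) :=
    key k' (Finset.mem_univ k') hk'
  set Stot := ∑ j, prob μ (fun ω => (K ω, X ω)) (j, x) with hStot
  have hpos : 0 < Stot := by
    rw [← h1]
    exact lt_of_le_of_ne (prob_nonneg' hμ0 _ _) (Ne.symm hk)
  have hge : prob μ (fun ω => (K ω, X ω)) (k, x) +
      prob μ (fun ω => (K ω, X ω)) (k', x) ≤ Stot := by
    rw [hStot]
    have : ({k, k'} : Finset T) ⊆ Finset.univ := Finset.subset_univ _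
    calc prob μ (fun ω => (K ω, X ω)) (k, x) + prob μ (fun ω => (K ω, X ω)) (k', x)
        = ∑ j ∈ ({k, k'} : Finset T), prob μ (fun ω => (K ω, X ω)) (j, x) := by
          rw [Finset.sum_pair hne]
      _ ≤ ∑ j, prob μ (fun ω => (K ω, X ω)) (j, x) :=
          Finset.sum_le_sum_of_subset_of_nonneg this
            (fun j _ _ => prob_nonneg' hμ0 _ _)
  rw [h1, h2] at hge
  linarith

end Helpers

/-- Gács–Körner: for a doubly symmetric binary source (`X` uniform, `Z` independent of `X`
with `Pr(Z = 0) = ε`, `0 < ε < 1/2`, `Y = X ⊕ Z`), any `K` that is a deterministic function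
of `X` and also of `Y` has zero entropy. (`false` encodes `0`.) -/
theorem gacs_korner_trivial {Ω T : Type*} [Fintype Ω] [Fintype T] [DecidableEq T]
    (μ : Ω → ℝ) (hμ : IsPMF μ) (ε : ℝ) (hε0 : 0 < ε) (hε : ε < 1 / 2)
    (X Z : Ω → Bool)
    (hX : prob μ X true = 1 / 2)
    (hZ : prob μ Z false = ε)
    (hindep : ∀ x z, prob μ (fun ω => (X ω, Z ω)) (x, z) = prob μ X x * prob μ Z z)
    (K : Ω → T)
    (hKX : condEntropy μ K X = 0)
    (hKY : condEntropy μ K (fun ω => xor (X ω) (Z ω)) = 0) :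
    entropy μ K = 0 := by
  obtain ⟨hμ0, hμ1⟩ := hμ
  set Y : Ω → Bool := fun ω => xor (X ω) (Z ω) with hY
  -- determinism from the two conditional entropies
  have detX := det_of_condEntropy_zero hμ0 K X hKX
  have detY := det_of_condEntropy_zero hμ0 K Y hKY
  -- marginals of X and Z
  have hXsum : prob μ X false + prob μ X true = 1 := by
    have := sum_prob μ X
    rw [hμ1, Fintype.sum_bool] at this
    linarith
  have hXf : prob μ X false = 1 / 2 := by linarith [hXsum, hX]
  have hZsum : prob μ Z false + prob μ Z true = 1 := by
    have := sum_prob μ Z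
    rw [hμ1, Fintype.sum_bool] at this
    linarith
  have hZt : prob μ Z true = 1 - ε := by linarith
  have hXpos : ∀ x, 0 < prob μ X x := by
    intro x; cases x <;> [rw [hXf]; rw [hX]] <;> norm_num
  have hZpos : ∀ z, 0 < prob μ Z z := by
    intro z; cases z <;> [rw [hZ]; rw [hZt]] <;> linarith
  -- existence of a point with positive mass in each (X, Y) cell
  have hcell : ∀ x y : Bool, ∃ ω, μ ω ≠ 0 ∧ X ω = x ∧ Y ω = y := by
    intro x y
    have hpos : 0 < prob μ (fun ω => (X ω, Z ω)) (x, xor x y) := by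
      rw [hindep]; exact mul_pos (hXpos x) (hZpos _)
    have hne : prob μ (fun ω => (X ω, Z ω)) (x, xor x y) ≠ 0 := ne_of_gt hpos
    rw [prob] at hne
    obtain ⟨ω, hωmem, hω⟩ := Finset.exists_ne_zero_of_sum_ne_zero hne
    rw [Finset.mem_filter] at hωmem
    have hXZ : X ω = x ∧ Z ω = xor x y := by
      have := hωmem.2
      exact Prod.mk.injEq .. ▸ (by simpa using this)
    refine ⟨ω, hω, hXZ.1, ?_⟩
    rw [hY]
    simp only [hXZ.1, hXZ.2]
    cases x <;> cases y <;> rfl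
  -- support is nonempty
  have hsupp : ∃ ω0, μ ω0 ≠ 0 := by
    by_contra h
    push_neg at h
    rw [Finset.sum_eq_zero (fun ω _ => h ω)] at hμ1
    norm_num at hμ1
  obtain ⟨ω0, hω0⟩ := hsupp
  -- key: joint prob positivity at sample points
  have jointX : ∀ ω, μ ω ≠ 0 → prob μ (fun ω => (K ω, X ω)) (K ω, X ω) ≠ 0 := by
    intro ω hω
    have := single_le_prob hμ0 (fun ω => (K ω, X ω)) ω
    have h0 := hμ0 ω
    intro hc
    rw [hc] at this
    exact hω (le_antisymm this h0)
  have jointY : ∀ ω, μ ω ≠ 0 → prob μ (fun ω => (K ω, Y ω)) (K ω, Y ω) ≠ 0 := by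
    intro ω hω
    have := single_le_prob hμ0 (fun ω => (K ω, Y ω)) ω
    have h0 := hμ0 ω
    intro hc
    rw [hc] at this
    exact hω (le_antisymm this h0)
  -- K is constant (= K ω0) on the support
  have hconst : ∀ ω, μ ω ≠ 0 → K ω = K ω0 := by
    intro ω hω
    obtain ⟨ω1, hω1, hX1, hY1⟩ := hcell (X ω0) (Y ω)
    have e1 : K ω1 = K ω0 := by
      apply detX (X ω0)
      · rw [← hX1]; exact jointX ω1 hω1
      · exact jointX ω0 hω0
    have e2 : K ω = K ω1 := by
      apply detY (Y ω)
      · exact jointY ω hω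
      · rw [← hY1]; exact jointY ω1 hω1
    rw [e2, e1]
  -- the distribution of K is a point mass at K ω0
  have hprobK : ∀ k, k ≠ K ω0 → prob μ K k = 0 := by
    intro k hk
    rw [prob]
    apply Finset.sum_eq_zero
    intro ω hωmem
    rw [Finset.mem_filter] at hωmem
    by_contra hne
    exact hk (hωmem.2 ▸ hconst ω hne)
  have hprobK0 : prob μ K (K ω0) = 1 := by
    have := sum_prob μ K
    rw [hμ1] at this
    rw [← this, Finset.sum_eq_single (K ω0)]
    · intro k _ hk; exact hprobK k hk
    · intro h; exact absurd (Finset.mem_univ _) h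
  -- conclude
  rw [entropy]
  apply Finset.sum_eq_zero
  intro k _
  by_cases hk : k = K ω0
  · rw [hk, hprobK0, Real.negMulLog_one]
  · rw [hprobK k hk, Real.negMulLog_zero]
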